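/- Let Γ_B = -(1/2) Σ_{i,j=1}^m vᵢ(vⱼ L_{ij}) with L_{ij} = xᵢ∂ⱼ - xⱼ∂ᵢ be the spherical Dirac operator on a hypercomplex subspace M of dimension m+1. Then Γ_B applied to the identity function x ↦ x equals (m-1)·Im(x), where Im(x) = (x - x^c)/2. -/

import Mathlib

/-!
On the identity function every `L_{ij}` is the constant-coefficient expression
`xᵢ vⱼ - xⱼ vᵢ`. For `i ≠ j`, anticommutation and left alternativity give
`vᵢ (vⱼ (xᵢ vⱼ - xⱼ vᵢ)) = -xᵢ vᵢ - xⱼ vⱼ`, and the diagonal terms vanish, so summing over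
the ordered pairs of distinct indices counts each `xₖ vₖ` exactly `2(m - 1)` times.
-/

noncomputable section
namespace PaperStmt

variable {A : Type*} [NormedAddCommGroup A] [NormedSpace ℝ A] [One A] [Mul A] {m : ℕ}

/-- Partial derivative in the `i`-th coordinate direction. -/
def pd (i : Fin (m + 1)) (f : (Fin (m + 1) → ℝ) → A) : (Fin (m + 1) → ℝ) → A :=
  fun x => fderiv ℝ f x (Pi.single i 1)

/-- The tangential operator `L_{ij} = xᵢ ∂ⱼ - xⱼ ∂ᵢ`. -/
def Lop (i j : Fin (m + 1)) (f : (Fin (m + 1) → ℝ) → A) : (Fin (m + 1) → ℝ) → A :=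
  fun x => x i • pd j f x - x j • pd i f x

/-- The spherical Dirac operator `Γ_B = -(1/2) ∑_{i,j=1}^m vᵢ (vⱼ L_{ij})`. -/
def Gam (v : Fin (m + 1) → A) (f : (Fin (m + 1) → ℝ) → A) : (Fin (m + 1) → ℝ) → A :=
  fun x => -((2 : ℝ)⁻¹ •
    ∑ i ∈ Finset.univ.erase (0 : Fin (m + 1)),
      ∑ j ∈ Finset.univ.erase (0 : Fin (m + 1)), v i * (v j * Lop i j f x))

/-- The point of the hypercomplex subspace `M` with coordinates `x` w.r.t. the
basis `(1, v₁, …, v_m)`. -/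
def iot (v : Fin (m + 1) → A) (x : Fin (m + 1) → ℝ) : A :=
  ∑ i : Fin (m + 1), x i • v i

omit [One A] [Mul A] in
theorem pd_iot (v : Fin (m + 1) → A) (x : Fin (m + 1) → ℝ) (j : Fin (m + 1)) :
    pd j (iot v) x = v j := by
  let L : (Fin (m + 1) → ℝ) →L[ℝ] A :=
    ∑ i, (ContinuousLinearMap.proj i : (Fin (m + 1) → ℝ) →L[ℝ] ℝ).smulRight (v i)
  have hL : iot v = ⇑L := by
    funext y
    simp [L, iot, sum_apply]
  rw [pd, hL, ContinuousLinearMap.fderiv]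
  simp [L, sum_apply, Pi.single_apply]

omit [One A] [Mul A] in
theorem Lop_iot (v : Fin (m + 1) → A) (x : Fin (m + 1) → ℝ) (i j : Fin (m + 1)) :
    Lop i j (iot v) x = x i • v j - x j • v i := by
  simp only [Lop, pd_iot]

theorem mul_mul_smul_sub_smul (hbil : IsBoundedBilinearMap ℝ fun p : A × A => p.1 * p.2)
    (hone : ∀ a : A, 1 * a = a) (hone' : ∀ a : A, a * 1 = a)
    (hLA : ∀ x y : A, x * x * y = x * (x * y)) {a b : A} (ha : a * a = -1) (hb : b * b = -1)
    (hab : a * b = -(b * a)) (s t : ℝ) :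
    a * (b * (s • b - t • a)) = -(s • a) - t • b := by
  let B := hbil.toContinuousLinearMap
  have hB : ∀ c d : A, c * d = B c d := fun _ _ => rfl
  -- `a (b a) = -a (a b) = -(a a) b = b`
  have hba : b * a = -(a * b) := by rw [hab, neg_neg]
  simp only [hB] at ha hb hba hone hone' hLA ⊢
  simp only [map_sub, map_smul, map_neg, hb, hba, ← hLA, ha, neg_apply, hone,
    hone', neg_neg]
  module

theorem sum_sum_eq_of_offDiag {ι E : Type*} [DecidableEq ι] [AddCommGroup E] [Module ℝ E]
    (s : Finset ι) (F : ι → ι → E) (g : ι → E) (hdiag : ∀ i ∈ s, F i i = 0)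
    (hoff : ∀ i ∈ s, ∀ j ∈ s, i ≠ j → F i j = -g i - g j) :
    ∑ i ∈ s, ∑ j ∈ s, F i j = -(2 * ((s.card : ℝ) - 1)) • ∑ i ∈ s, g i := by
  have hF : ∀ i ∈ s, ∀ j ∈ s, F i j = (-g i - g j) + if i = j then (2 : ℝ) • g i else 0 := by
    intro i hi j hj
    by_cases hij : i = j
    · subst hij
      rw [hdiag i hi, if_pos rfl]
      module
    · rw [hoff i hi j hj hij, if_neg hij, add_zero]
  rw [Finset.sum_congr rfl fun i hi => Finset.sum_congr rfl (hF i hi)]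
  simp only [Finset.sum_add_distrib, Finset.sum_sub_distrib, Finset.sum_ite_eq, Finset.sum_ite_mem,
    Finset.inter_self, Finset.sum_const, Finset.sum_neg_distrib, ← Finset.smul_sum,
    ← Nat.cast_smul_eq_nsmul ℝ]
  module

theorem gamma_of_identity_general
    (hbil : IsBoundedBilinearMap ℝ fun p : A × A => p.1 * p.2)
    (hone : ∀ a : A, 1 * a = a) (hone' : ∀ a : A, a * 1 = a)
    (hLA : ∀ x y : A, x * x * y = x * (x * y))
    (v : Fin (m + 1) → A)
    (hsq : ∀ i : Fin (m + 1), i ≠ 0 → v i * v i = -1)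
    (hanti : ∀ i j : Fin (m + 1), i ≠ 0 → j ≠ 0 → i ≠ j → v i * v j = -(v j * v i)) :
    ∀ x : Fin (m + 1) → ℝ,
      Gam v (iot v) x
        = ((m : ℝ) - 1) • ∑ i ∈ Finset.univ.erase (0 : Fin (m + 1)), x i • v i := by
  intro x
  have hmul_zero : ∀ a : A, a * 0 = 0 := fun a => map_zero (hbil.toContinuousLinearMap a)
  have hdiag : ∀ i ∈ Finset.univ.erase (0 : Fin (m + 1)), v i * (v i * Lop i i (iot v) x) = 0 := by
    intro i _
    rw [Lop_iot, sub_self, hmul_zero, hmul_zero]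
  have hoff : ∀ i ∈ Finset.univ.erase (0 : Fin (m + 1)), ∀ j ∈ Finset.univ.erase 0, i ≠ j →
      v i * (v j * Lop i j (iot v) x) = -(x i • v i) - x j • v j := by
    intro i hi j hj hij
    rw [Lop_iot]
    exact mul_mul_smul_sub_smul hbil hone hone' hLA (hsq i (Finset.ne_of_mem_erase hi))
      (hsq j (Finset.ne_of_mem_erase hj)) (hanti i j (Finset.ne_of_mem_erase hi)
        (Finset.ne_of_mem_erase hj) hij) (x i) (x j)
  have hcard : (Finset.univ.erase (0 : Fin (m + 1))).card = m := by simp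
  dsimp only [Gam]
  rw [sum_sum_eq_of_offDiag _ _ (fun i => x i • v i) hdiag hoff, hcard]
  module

/-- The spherical Dirac operator `Γ_B` applied to the identity function
`x ↦ x` of a hypercomplex subspace `M` of dimension `m+1` equals
`(m-1)·Im(x)`, where `Im(x) = (x - xᶜ)/2 = ∑_{i=1}^m xᵢ vᵢ`. -/
theorem gamma_of_identity
    (hbil : IsBoundedBilinearMap ℝ fun p : A × A => p.1 * p.2)
    (hone : ∀ a : A, 1 * a = a) (hone' : ∀ a : A, a * 1 = a)
    (hLA : ∀ x y : A, x * x * y = x * (x * y))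
    (hRA : ∀ x y : A, x * y * y = x * (y * y))
    (hFA : ∀ x y : A, x * y * x = x * (y * x))
    (hm : 2 ≤ m)
    (v : Fin (m + 1) → A) (hv0 : v 0 = 1)
    (hsq : ∀ i : Fin (m + 1), i ≠ 0 → v i * v i = -1)
    (hanti : ∀ i j : Fin (m + 1), i ≠ 0 → j ≠ 0 → i ≠ j → v i * v j = -(v j * v i)) :
    ∀ x : Fin (m + 1) → ℝ,
      Gam v (iot v) x
        = ((m : ℝ) - 1) • ∑ i ∈ Finset.univ.erase (0 : Fin (m + 1)), x i • v i :=
  gamma_of_identity_general hbil hone hone' hLA v hsq hanti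

end PaperStmt
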